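/- arXiv:1604.02381 — 7 statements merged into one kernel-verified Lean document; each statement's English description precedes it below -/
import Mathlib

section
/- Let X and G be commutative groups, u : X → G a homomorphism, Γ a commutative group, and δ : X × G → Γ a function satisfying the cocycle condition δ(x+y,g) = δ(x, u(y)g)·δ(y,g). Assume for each x the map λ(x) : g ↦ δ(x,g)/δ(x,1) is a group homomorphism G → Γ. Then λ is symmetric with respect to u, i.e. λ(x)(u(y)) = λ(y)(u(x)) for all x, y ∈ X. -/
/-- Under the cocycle condition, λ(x)(u(y)) = λ(y)(u(x)). -/
theorem stmt_1 {X : Type*} [AddCommGroup X] {G Γ : Type*} [CommGroup G] [CommGroup Γ]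
    (u : X → G) (hu : ∀ x y, u (x + y) = u x * u y)
    (δ : X → G → Γ)
    (hδ : ∀ x y g, δ (x + y) g = δ x (u y * g) * δ y g)
    (lam : X → G → Γ) (hlam : ∀ x g, lam x g = δ x g * (δ x 1)⁻¹)
    (hhom : ∀ x g g', lam x (g * g') = lam x g * lam x g') :
    ∀ x y, lam x (u y) = lam y (u x) := by
  intro x y
  have h : δ x (u y * 1) * δ y 1 = δ y (u x * 1) * δ x 1 := by
    rw [← hδ x y 1, ← hδ y x 1, add_comm]
  simp only [mul_one] at h
  rw [hlam, hlam, ← div_eq_mul_inv, ← div_eq_mul_inv, div_eq_div_iff_mul_eq_mul]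
  exact h
end

section
/- Let X, G be commutative groups, u : X → G a homomorphism, Γ a commutative group, and let λ : X → Hom(G,Γ) be a group homomorphism satisfying the symmetry condition λ(x)(u(y)) = λ(y)(u(x)). Then there exists a function (not necessarily a homomorphism) α : X → Γ with λ(x)(u(y)) = α(x+y)·α(x)⁻¹·α(y)⁻¹ for all x,y if and only if there exists a cocycle δ : X × G → Γ (i.e. δ(x+y,g) = δ(x,u(y)g)·δ(y,g)) such that λ(x)(g) = δ(x,g)·δ(x,1)⁻¹ for all x, g. (Exactness of the sequence K → Λ → Σ in Proposition 1.4.) -/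
/-- Exactness of K → Λ → Σ: for λ ∈ Λ, there exists α : X → Γ with
λ(x)(u(y)) = α(x+y)α(x)⁻¹α(y)⁻¹ iff λ = λ_δ for some cocycle δ. -/
theorem stmt_3 {X : Type*} [AddCommGroup X] {G Γ : Type*} [CommGroup G] [CommGroup Γ]
    (u : X → G) (hu : ∀ x y, u (x + y) = u x * u y)
    (lam : X → G → Γ)
    (hadd : ∀ x y g, lam (x + y) g = lam x g * lam y g)
    (hmul : ∀ x g g', lam x (g * g') = lam x g * lam x g')
    (hsym : ∀ x y, lam x (u y) = lam y (u x)) :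
    (∃ α : X → Γ, ∀ x y, lam x (u y) = α (x + y) * (α x)⁻¹ * (α y)⁻¹) ↔
      (∃ δ : X → G → Γ, (∀ x y g, δ (x + y) g = δ x (u y * g) * δ y g) ∧
        ∀ x g, lam x g = δ x g * (δ x 1)⁻¹) := by
  have aux : ∀ a b c : Γ, a * b⁻¹ * c⁻¹ * b * c = a := by
    intro a b c
    calc a * b⁻¹ * c⁻¹ * b * c = a * (b⁻¹ * b) * (c⁻¹ * c) := by ac_rfl
      _ = a := by simp
  have hone : ∀ x, lam x 1 = 1 := by
    intro x
    have := hmul x 1 1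
    simp at this
    exact this
  constructor
  · rintro ⟨α, hα⟩
    have key : ∀ x y, α (x + y) = lam x (u y) * α x * α y := by
      intro x y
      rw [hα x y, aux]
    refine ⟨fun x g => lam x g * α x, ?_, ?_⟩
    · intro x y g
      simp only []
      rw [key, hmul, hadd]
      ac_rfl
    · intro x g
      simp [hone]
  · rintro ⟨δ, hcoc, hδ⟩
    refine ⟨fun x => δ x 1, fun x y => ?_⟩
    have h1 := hcoc x y 1
    rw [mul_one] at h1
    have h2 := hδ x (u y)
    have h3 : δ x (u y) * δ y 1 * (δ x 1)⁻¹ * (δ y 1)⁻¹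
        = δ x (u y) * (δ x 1)⁻¹ * (δ y 1 * (δ y 1)⁻¹) := by ac_rfl
    simp only []
    rw [h1, h2, h3]
    simp
end

section
/- Let X = ℤⁿ with standard basis e₁,…,eₙ, let G be a commutative group, u : X → G a homomorphism, Γ a commutative group, and λ : X → Hom(G,Γ) a homomorphism with λ(x)(u(y)) = λ(y)(u(x)) for all x, y. Define δ_λ : X × G → Γ by δ_λ(x,g) = λ(x)(g) · ∏ᵢ λ(eᵢ)(u(eᵢ))^{nᵢ(nᵢ−1)/2} · ∏_{i<j} λ(eᵢ)(u(e_j))^{nᵢn_j}, where x = Σ nᵢeᵢ. Then δ_λ satisfies the cocycle condition δ_λ(x+y,g) = δ_λ(x, u(y)g)·δ_λ(y,g), and moreover δ_λ(x,g)·δ_λ(x,1)⁻¹ = λ(x)(g). -/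
/-!
Write `C i j = λ(eᵢ)(u(eⱼ))`. Both `λ(x)(u(y))` and the correction term
`q(x) = ∏ᵢ Cᵢᵢ^(nᵢ(nᵢ-1)/2) · ∏_{i<j} Cᵢⱼ^(nᵢnⱼ)` are expanded in the matrix `C`, which is
symmetric by the symmetry of `λ`. Then `q` is a quadratic refinement of the bilinear form
`(x, y) ↦ λ(x)(u(y))`, i.e. `q(x + y) = q(x) q(y) λ(x)(u(y))`, and `δ(x, g) = λ(x)(g) q(x)`;
the cocycle identity is exactly this refinement property, and `δ(x, g) δ(x, 1)⁻¹ = λ(x)(g)`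
because `q(x)` does not depend on `g`.
-/

open Finset

theorem Int.add_mul_add_sub_one_ediv_two (a b : ℤ) :
    (a + b) * (a + b - 1) / 2 = a * (a - 1) / 2 + b * (b - 1) / 2 + a * b := by
  have ha : (2 : ℤ) ∣ a * (a - 1) := (Int.even_mul_pred_self a).two_dvd
  rw [show (a + b) * (a + b - 1) = a * (a - 1) + b * (b - 1) + a * b * 2 by ring,
    Int.add_mul_ediv_right _ _ two_ne_zero, Int.add_ediv_of_dvd_left ha]

theorem Finset.prod_prod_eq_prod_diag_mul_prod_prod_Ioi {ι M : Type*} [CommMonoid M]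
    [LinearOrder ι] [Fintype ι] [LocallyFiniteOrderTop ι] [LocallyFiniteOrderBot ι]
    (g : ι → ι → M) :
    ∏ i, ∏ j, g i j = (∏ i, g i i) * ∏ i, ∏ j ∈ Ioi i, g i j * g j i := by
  rw [prod_prod_Ioi_mul_eq_prod_prod_off_diag (fun i j => g j i), ← prod_mul_distrib]
  exact prod_congr rfl fun i _ => Fintype.prod_eq_mul_prod_compl i _

section ZpowForms

variable {ι Γ : Type*} [Fintype ι] [CommGroup Γ]

theorem eq_prod_zpow_of_map_add [DecidableEq ι] (F : (ι → ℤ) → Γ)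
    (hF : ∀ a b, F (a + b) = F a * F b) (x : ι → ℤ) :
    F x = ∏ i, F (Pi.single i 1) ^ x i := by
  let φ : (ι → ℤ) →+ Additive Γ := AddMonoidHom.mk' (fun a => Additive.ofMul (F a)) hF
  have hφ : φ x = ∑ i, x i • φ (Pi.single i 1) := by
    conv_lhs => rw [← univ_sum_single x]
    simp only [map_sum, ← map_zsmul, ← Pi.single_smul, smul_eq_mul, mul_one]
  exact congrArg Additive.toMul hφ

def bilinProd (C : ι → ι → Γ) (x y : ι → ℤ) : Γ :=
  ∏ i, ∏ j, C i j ^ (x i * y j)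

theorem eq_bilinProd_of_map_add [DecidableEq ι] (B : (ι → ℤ) → (ι → ℤ) → Γ)
    (hB₁ : ∀ x x' y, B (x + x') y = B x y * B x' y)
    (hB₂ : ∀ x y y', B x (y + y') = B x y * B x y') (x y : ι → ℤ) :
    B x y = bilinProd (fun i j => B (Pi.single i 1) (Pi.single j 1)) x y := by
  rw [eq_prod_zpow_of_map_add (B · y) (hB₁ · · y) x, bilinProd]
  refine prod_congr rfl fun i _ => ?_
  rw [eq_prod_zpow_of_map_add (B _) (hB₂ _) y, ← prod_zpow]
  exact prod_congr rfl fun j _ => by rw [← zpow_mul, mul_comm]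

variable [LinearOrder ι] [LocallyFiniteOrderTop ι]

def quadProd (C : ι → ι → Γ) (x : ι → ℤ) : Γ :=
  (∏ i, C i i ^ (x i * (x i - 1) / 2)) * ∏ i, ∏ j ∈ Ioi i, C i j ^ (x i * x j)

theorem bilinProd_eq_of_symm [LocallyFiniteOrderBot ι] {C : ι → ι → Γ}
    (hC : ∀ i j, C j i = C i j) (x y : ι → ℤ) :
    bilinProd C x y =
      (∏ i, C i i ^ (x i * y i)) * ∏ i, ∏ j ∈ Ioi i, C i j ^ (x i * y j + y i * x j) := by
  rw [bilinProd, prod_prod_eq_prod_diag_mul_prod_prod_Ioi]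
  congr 1
  exact prod_congr rfl fun i _ => prod_congr rfl fun j _ => by
    rw [hC, ← zpow_add, mul_comm (x j)]

theorem quadProd_add [LocallyFiniteOrderBot ι] {C : ι → ι → Γ}
    (hC : ∀ i j, C j i = C i j) (x y : ι → ℤ) :
    quadProd C (x + y) = quadProd C x * quadProd C y * bilinProd C x y := by
  have hdiag : ∀ i, C i i ^ ((x + y) i * ((x + y) i - 1) / 2) =
      C i i ^ (x i * (x i - 1) / 2) * C i i ^ (y i * (y i - 1) / 2) * C i i ^ (x i * y i) := by
    intro i
    rw [Pi.add_apply, Int.add_mul_add_sub_one_ediv_two, zpow_add, zpow_add]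
  have hoff : ∀ i j, C i j ^ ((x + y) i * (x + y) j) =
      C i j ^ (x i * x j) * C i j ^ (y i * y j) * C i j ^ (x i * y j + y i * x j) := by
    intro i j
    rw [← zpow_add, ← zpow_add, Pi.add_apply, Pi.add_apply]
    ring_nf
  simp only [quadProd, bilinProd_eq_of_symm hC, hdiag, hoff, prod_mul_distrib]
  ac_rfl

end ZpowForms

/-- For X = ℤⁿ with standard basis e, and λ ∈ Λ, the explicit
δ_λ(x,g) = λ(x)(g)·∏ᵢ λ(eᵢ)(u(eᵢ))^{nᵢ(nᵢ-1)/2}·∏_{i<j} λ(eᵢ)(u(e_j))^{nᵢn_j}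
is a cocycle with λ_{δ_λ} = λ. -/
theorem stmt_4 {n : ℕ} {G Γ : Type*} [CommGroup G] [CommGroup Γ]
    (u : (Fin n → ℤ) → G) (hu : ∀ x y, u (x + y) = u x * u y)
    (lam : (Fin n → ℤ) → G → Γ)
    (hadd : ∀ x y g, lam (x + y) g = lam x g * lam y g)
    (hmul : ∀ x g g', lam x (g * g') = lam x g * lam x g')
    (hsym : ∀ x y, lam x (u y) = lam y (u x))
    (e : Fin n → (Fin n → ℤ)) (he : ∀ i, e i = Pi.single i 1)
    (δ : (Fin n → ℤ) → G → Γ)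
    (hδdef : ∀ x g, δ x g =
      lam x g * (∏ i : Fin n, (lam (e i) (u (e i))) ^ ((x i * (x i - 1)) / 2)) *
        ∏ i : Fin n, ∏ j ∈ Finset.Ioi i, (lam (e i) (u (e j))) ^ (x i * x j)) :
    (∀ x y g, δ (x + y) g = δ x (u y * g) * δ y g) ∧
      (∀ x g, δ x g * (δ x 1)⁻¹ = lam x g) := by
  set C : Fin n → Fin n → Γ := fun i j => lam (e i) (u (e j))
  have hC : ∀ i j, C j i = C i j := fun i j => hsym _ _
  have hδ : ∀ x g, δ x g = lam x g * quadProd C x := fun x g => by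
    rw [hδdef, mul_assoc]; rfl
  have hbilin : ∀ x y, lam x (u y) = bilinProd C x y := by
    simp only [C, he]
    exact eq_bilinProd_of_map_add (fun x y => lam x (u y)) (fun x x' y => hadd x x' (u y))
      (fun x y y' => by simp only [hu, hmul])
  have hone : ∀ x, lam x 1 = 1 := fun x => by simpa using hmul x 1 1
  refine ⟨fun x y g => ?_, fun x g => ?_⟩
  · rw [hδ, hδ, hδ, quadProd_add hC, ← hbilin, hadd, hmul]
    ac_rfl
  · rw [hδ, hδ, hone, one_mul, mul_inv_cancel_right]
end

section
/- Exactness at K: with the notation above, a class [δ] ∈ K satisfies Θ([δ]) = 1 (i.e. λ_δ trivial) if and only if [δ] = β*(α) for some group homomorphism α : X → Γ, where β*(α) is the class of the cocycle δ_α(x,g) = α(x). Moreover β*(α) is the trivial class if and only if α factors as α = ν ∘ u for some group homomorphism ν : G → Γ. Hence the sequence Hom(G,Γ) → Hom(X,Γ) → K → Λ is exact. -/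
/-- Exactness of Hom(G,Γ) → Hom(X,Γ) → K → Λ: Θ([δ]) is trivial
iff [δ] = β*(α) for a homomorphism α : X → Γ, and β*(α) is the trivial class iff
α = ν ∘ u for a homomorphism ν : G → Γ. -/
theorem stmt_10 {X : Type*} [AddCommGroup X] {G Γ : Type*} [CommGroup G] [CommGroup Γ]
    (u : X → G) (hu : ∀ x y, u (x + y) = u x * u y)
    (Equiv : (X → G → Γ) → (X → G → Γ) → Prop)
    (hEquiv : ∀ δ₁ δ₂, Equiv δ₁ δ₂ ↔
      ∃ ν : G → Γ, (∀ g g', ν (g * g') = ν g * ν g') ∧ ∀ x g, ν (u x) * δ₁ x g = δ₂ x g)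
    (lam : (X → G → Γ) → X → G → Γ)
    (hlam : ∀ δ x g, lam δ x g = δ x g * (δ x 1)⁻¹) :
    (∀ δ : X → G → Γ,
      (∀ x y g, δ (x + y) g = δ x (u y * g) * δ y g) →
      (∀ x g g', lam δ x (g * g') = lam δ x g * lam δ x g') →
      ((∀ x g, lam δ x g = 1) ↔
        ∃ α : X → Γ, (∀ x y, α (x + y) = α x * α y) ∧ Equiv (fun x _ => α x) δ)) ∧
    (∀ α : X → Γ, (∀ x y, α (x + y) = α x * α y) →
      (Equiv (fun _ _ => (1 : Γ)) (fun x _ => α x) ↔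
        ∃ ν : G → Γ, (∀ g g', ν (g * g') = ν g * ν g') ∧ ∀ x, α x = ν (u x))) := by
  constructor
  · intro δ hcoc _
    constructor
    · intro htriv
      have hconst : ∀ x g, δ x g = δ x 1 := by
        intro x g
        have := hlam δ x g
        rw [htriv x g] at this
        exact mul_inv_eq_one.mp this.symm
      refine ⟨fun x => δ x 1, ?_, ?_⟩
      · intro x y
        have := hcoc x y 1
        rw [hconst x (u y * 1)] at this
        exact this
      · rw [hEquiv]
        exact ⟨fun _ => 1, by simp, fun x g => by simp [hconst x g]⟩
    · intro ⟨α, hα, hEq⟩ x g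
      rw [hEquiv] at hEq
      obtain ⟨ν, hν, h⟩ := hEq
      have h1 := h x g
      have h2 := h x 1
      rw [hlam, ← h1, ← h2]
      group
  · intro α hα
    rw [hEquiv]
    constructor
    · intro ⟨ν, hν, h⟩
      exact ⟨ν, hν, fun x => by have := h x 1; simpa [eq_comm] using this⟩
    · intro ⟨ν, hν, h⟩
      exact ⟨ν, hν, fun x g => by simp [h x]⟩
end

section
/- Let M = [u : X → T] with X = ℤ, T a commutative group, u the trivial homomorphism, and Γ = T with a nontrivial homomorphism λ : T → Γ available. Define δ : ℤ × T → Γ by δ(n,g) = λ(g)ⁿ. Then δ satisfies the cocycle condition δ(n+m, g) = δ(n, u(m)g)·δ(m,g), but there is no group homomorphism α : ℤ → Γ with δ(n,g) = α(n) for all n, g (since λ is nonconstant). Hence the class of δ lies in the kernel of ι* but not in the image of β*, i.e. the sequence Pic(X[1]) → Pic(M) → Pic(T) is not exact. -/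
theorem not_exists_zpow_eq_of_ne {T Γ : Type*} [DivInvMonoid Γ] {f : T → Γ} {g g' : T}
    (hne : f g ≠ f g') : ¬ ∃ α : ℤ → Γ, ∀ n g, f g ^ n = α n := by
  rintro ⟨α, hα⟩
  exact hne (by simpa using (hα 1 g).trans (hα 1 g').symm)

/-- With X = ℤ, u trivial and λ : T → Γ a nonconstant
homomorphism, δ(n,g) = λ(g)ⁿ is a cocycle which is not of the form
(n,g) ↦ α(n); hence Pic(X[1]) → Pic(M) → Pic(T) is not exact. -/
theorem stmt_12 {T Γ : Type*} [CommGroup T] [CommGroup Γ]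
    (u : ℤ → T) (hu : ∀ n, u n = 1)
    (lam : T → Γ) (hlam : ∀ g g', lam (g * g') = lam g * lam g')
    (hnontriv : ∃ g, lam g ≠ 1)
    (δ : ℤ → T → Γ) (hδ : ∀ n g, δ n g = (lam g) ^ n) :
    (∀ n m g, δ (n + m) g = δ n (u m * g) * δ m g) ∧
    ¬ ∃ α : ℤ → Γ, ∀ n g, δ n g = α n := by
  obtain rfl : δ = fun n g => lam g ^ n := funext₂ hδ
  refine ⟨fun n m g => by simp only [hu, one_mul, zpow_add], ?_⟩
  obtain ⟨g, hg⟩ := hnontriv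
  have hlam_one : lam 1 = 1 := (MonoidHom.mk' lam hlam).map_one
  exact not_exists_zpow_eq_of_ne (g' := 1) (hlam_one ▸ hg)
end

section
/- Let X³ act on G³ componentwise via u : X → G, with X, G, Γ commutative groups. Let δ : X × G → Γ satisfy the cocycle condition δ(x+y,g) = δ(x,u(y)g)δ(y,g), and define θ(δ) : X³ × G³ → Γ by θ(δ)((x₁,x₂,x₃),(a₁,a₂,a₃)) = δ(x₁+x₂+x₃, a₁a₂a₃)·δ(x₁+x₂, a₁a₂)⁻¹·δ(x₁+x₃, a₁a₃)⁻¹·δ(x₂+x₃, a₂a₃)⁻¹·δ(x₁,a₁)·δ(x₂,a₂)·δ(x₃,a₃). Then θ(δ) satisfies the cocycle condition for the componentwise action: θ(δ)(x+x', a) = θ(δ)(x, u³(x')·a)·θ(δ)(x', a) for all x, x' ∈ X³ and a ∈ G³, and θ(δ) is invariant under simultaneous permutation of the three components of x and a. -/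
set_option maxHeartbeats 2000000


/-- θ(δ) on X³ × G³ satisfies the cocycle condition for the
componentwise action of X³ on G³ via u³, and is invariant under simultaneous
permutations of the three components. -/
theorem stmt_16 {X : Type*} [AddCommGroup X] {G Γ : Type*} [CommGroup G] [CommGroup Γ]
    (u : X → G) (hu : ∀ x y, u (x + y) = u x * u y)
    (δ : X → G → Γ)
    (hδ : ∀ x y g, δ (x + y) g = δ x (u y * g) * δ y g)
    (u3 : X × X × X → G × G × G)
    (hu3 : ∀ x, u3 x = (u x.1, u x.2.1, u x.2.2))
    (θδ : X × X × X → G × G × G → Γ)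
    (hθδ : ∀ x a, θδ x a =
      δ (x.1 + x.2.1 + x.2.2) (a.1 * a.2.1 * a.2.2) *
        (δ (x.1 + x.2.1) (a.1 * a.2.1))⁻¹ *
        (δ (x.1 + x.2.2) (a.1 * a.2.2))⁻¹ *
        (δ (x.2.1 + x.2.2) (a.2.1 * a.2.2))⁻¹ *
        δ x.1 a.1 * δ x.2.1 a.2.1 * δ x.2.2 a.2.2) :
    (∀ x x' a, θδ (x + x') a = θδ x (u3 x' * a) * θδ x' a) ∧
    (∀ x₁ x₂ x₃ : X, ∀ a₁ a₂ a₃ : G,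
      θδ (x₁, x₂, x₃) (a₁, a₂, a₃) = θδ (x₂, x₁, x₃) (a₂, a₁, a₃) ∧
      θδ (x₁, x₂, x₃) (a₁, a₂, a₃) = θδ (x₁, x₃, x₂) (a₁, a₃, a₂)) := by
  constructor
  · rintro ⟨x1, x2, x3⟩ ⟨y1, y2, y3⟩ ⟨a1, a2, a3⟩
    simp only [hθδ, hu3, Prod.mk_add_mk, Prod.mk_mul_mk]
    rw [show x1 + y1 + (x2 + y2) + (x3 + y3) = (x1 + x2 + x3) + (y1 + y2 + y3) by abel,
        show x1 + y1 + (x2 + y2) = (x1 + x2) + (y1 + y2) by abel,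
        show x1 + y1 + (x3 + y3) = (x1 + x3) + (y1 + y3) by abel,
        show x2 + y2 + (x3 + y3) = (x2 + x3) + (y2 + y3) by abel,
        hδ (x1 + x2 + x3) (y1 + y2 + y3), hδ (x1 + x2) (y1 + y2),
        hδ (x1 + x3) (y1 + y3), hδ (x2 + x3) (y2 + y3),
        hδ x1 y1, hδ x2 y2, hδ x3 y3]
    simp only [hu, mul_inv]
    simp only [mul_comm, mul_left_comm, mul_assoc]
  · intro x1 x2 x3 a1 a2 a3
    constructor
    · simp only [hθδ]
      rw [show x2 + x1 + x3 = x1 + x2 + x3 by abel, show x2 + x1 = x1 + x2 by abel,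
          show a2 * a1 * a3 = a1 * a2 * a3 from by rw [mul_comm a2 a1],
          mul_comm a2 a1]
      simp only [mul_comm, mul_left_comm, mul_assoc]
    · simp only [hθδ]
      rw [show x1 + x3 + x2 = x1 + x2 + x3 by abel, show x3 + x2 = x2 + x3 by abel,
          show a1 * a3 * a2 = a1 * a2 * a3 from by rw [mul_right_comm],
          mul_comm a3 a2]
      simp only [mul_comm, mul_left_comm, mul_assoc]
end

section
/- Key step of the theorem of the cube for 1-motives (abstract version): with X, G, Γ commutative groups, u : X → G a homomorphism, δ : X × G → Γ a cocycle, and τ : G³ → Γ a function satisfying (i) symmetry under permutations τ(a_{σ(1)},a_{σ(2)},a_{σ(3)}) = τ(a₁,a₂,a₃), (ii) the cube cocycle identity τ(a,bc,d)·τ(b,c,d) = τ(ab,c,d)·τ(a,b,d), and the compatibility hypothesis that the 'error function' λ(x,a) := τ(u³(x)·a)⁻¹·θ(δ)(x,a)·τ(a) satisfies λ(x,a) = 1 whenever some component xᵢ = 0 and aᵢ = 1, and λ(x,·) : G³ → Γ is a group homomorphism whenever some xᵢ = 0. Then λ is identically 1, i.e. τ(u³(x)·a) = θ(δ)(x,a)·τ(a)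 for all x ∈ X³, a ∈ G³. -/
set_option maxHeartbeats 1000000 in
/-- Key step of the theorem of the cube for 1-motives: the error
function λ(x,a) = τ(u³(x)a)⁻¹·θ(δ)(x,a)·τ(a) is identically 1, given the
symmetry and cube cocycle identity for τ, the vanishing of λ when some
xᵢ = 0 and aᵢ = 1, and multiplicativity of λ(x,·) when some xᵢ = 0. -/
theorem stmt_17 {X : Type*} [AddCommGroup X] {G Γ : Type*} [CommGroup G] [CommGroup Γ]
    (u : X → G) (hu : ∀ x y, u (x + y) = u x * u y)
    (δ : X → G → Γ)
    (hδ : ∀ x y g, δ (x + y) g = δ x (u y * g) * δ y g)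
    (u3 : X × X × X → G × G × G)
    (hu3 : ∀ x, u3 x = (u x.1, u x.2.1, u x.2.2))
    (θδ : X × X × X → G × G × G → Γ)
    (hθδ : ∀ x a, θδ x a =
      δ (x.1 + x.2.1 + x.2.2) (a.1 * a.2.1 * a.2.2) *
        (δ (x.1 + x.2.1) (a.1 * a.2.1))⁻¹ *
        (δ (x.1 + x.2.2) (a.1 * a.2.2))⁻¹ *
        (δ (x.2.1 + x.2.2) (a.2.1 * a.2.2))⁻¹ *
        δ x.1 a.1 * δ x.2.1 a.2.1 * δ x.2.2 a.2.2)
    (τ : G × G × G → Γ)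
    (hτsym1 : ∀ a b c : G, τ (a, b, c) = τ (b, a, c))
    (hτsym2 : ∀ a b c : G, τ (a, b, c) = τ (a, c, b))
    (hτcoc : ∀ a b c d : G, τ (a, b * c, d) * τ (b, c, d) = τ (a * b, c, d) * τ (a, b, d))
    (lam : X × X × X → G × G × G → Γ)
    (hlamdef : ∀ x a, lam x a = (τ (u3 x * a))⁻¹ * θδ x a * τ a)
    (hvanish : ∀ x a, ((x.1 = 0 ∧ a.1 = 1) ∨ (x.2.1 = 0 ∧ a.2.1 = 1) ∨
      (x.2.2 = 0 ∧ a.2.2 = 1)) → lam x a = 1)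
    (hhom : ∀ x, (x.1 = 0 ∨ x.2.1 = 0 ∨ x.2.2 = 0) →
      ∀ a a', lam x (a * a') = lam x a * lam x a') :
    ∀ x a, lam x a = 1 := by
  -- u sends 0 to 1
  have hu0 : u 0 = 1 := by
    have h := hu 0 0
    rw [add_zero] at h
    exact (left_eq_mul.mp h)
  -- cocycle identity for θδ
  have hθcoc : ∀ x x' a, θδ (x + x') a = θδ x (u3 x' * a) * θδ x' a := by
    rintro ⟨x1, x2, x3⟩ ⟨y1, y2, y3⟩ ⟨a1, a2, a3⟩
    simp only [hθδ, hu3, Prod.mk_add_mk, Prod.mk_mul_mk]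
    rw [show x1 + y1 + (x2 + y2) + (x3 + y3) = (x1 + x2 + x3) + (y1 + y2 + y3) by abel,
        show x1 + y1 + (x2 + y2) = (x1 + x2) + (y1 + y2) by abel,
        show x1 + y1 + (x3 + y3) = (x1 + x3) + (y1 + y3) by abel,
        show x2 + y2 + (x3 + y3) = (x2 + x3) + (y2 + y3) by abel,
        hδ (x1 + x2 + x3) (y1 + y2 + y3), hδ (x1 + x2) (y1 + y2),
        hδ (x1 + x3) (y1 + y3), hδ (x2 + x3) (y2 + y3),
        hδ x1 y1, hδ x2 y2, hδ x3 y3,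
        show u y1 * a1 * (u y2 * a2) * (u y3 * a3) = u (y1 + y2 + y3) * (a1 * a2 * a3) by
          simp [hu, mul_comm, mul_left_comm],
        show u y1 * a1 * (u y2 * a2) = u (y1 + y2) * (a1 * a2) by
          simp [hu, mul_comm, mul_left_comm],
        show u y1 * a1 * (u y3 * a3) = u (y1 + y3) * (a1 * a3) by
          simp [hu, mul_comm, mul_left_comm],
        show u y2 * a2 * (u y3 * a3) = u (y2 + y3) * (a2 * a3) by
          simp [hu, mul_comm, mul_left_comm]]
    simp [mul_comm, mul_left_comm, mul_assoc]
  -- u3 is a homomorphism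
  have hu3add : ∀ x x', u3 (x + x') = u3 x * u3 x' := by
    intro x x'
    simp [hu3, hu, Prod.ext_iff]
  -- cocycle identity for lam
  have hcoc : ∀ x x' a, lam (x + x') a = lam x (u3 x' * a) * lam x' a := by
    intro x x' a
    rw [hlamdef, hlamdef, hlamdef, hθcoc, hu3add, mul_assoc (u3 x)]
    group
  -- lam vanishes when the last two coordinates of x are zero
  have key0 : ∀ (x1 : X) (a : G × G × G), lam (x1, 0, 0) a = 1 := by
    intro x1 a
    obtain ⟨a1, a2, a3⟩ := a
    have : ((a1, a2, a3) : G × G × G) = (a1, 1, 1) * (1, a2, 1) * (1, 1, a3) := by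
      simp [Prod.ext_iff]
    rw [this, hhom _ (Or.inr (Or.inl rfl)), hhom _ (Or.inr (Or.inl rfl)),
        hvanish _ _ (Or.inr (Or.inl ⟨rfl, rfl⟩)),
        hvanish _ _ (Or.inr (Or.inr ⟨rfl, rfl⟩)),
        hvanish _ _ (Or.inr (Or.inl ⟨rfl, rfl⟩))]
    simp
  -- lam vanishes when the first coordinate of x is zero
  have key1 : ∀ (x2 x3 : X) (a : G × G × G), lam (0, x2, x3) a = 1 := by
    intro x2 x3 a
    obtain ⟨a1, a2, a3⟩ := a
    have ha : ((a1, a2, a3) : G × G × G) = (a1, 1, 1) * (1, a2, 1) * (1, 1, a3) := by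
      simp [Prod.ext_iff]
    rw [ha, hhom _ (Or.inl rfl), hhom _ (Or.inl rfl),
        hvanish (0, x2, x3) (1, a2, 1) (Or.inl ⟨rfl, rfl⟩),
        hvanish (0, x2, x3) (1, 1, a3) (Or.inl ⟨rfl, rfl⟩)]
    have hx : ((0, x2, x3) : X × X × X) = (0, x2, 0) + (0, 0, x3) := by
      simp [Prod.ext_iff]
    rw [hx, hcoc, hvanish (0, 0, x3) (a1, 1, 1) (Or.inr (Or.inl ⟨rfl, rfl⟩))]
    have hq : u3 ((0, 0, x3) : X × X × X) * (a1, 1, 1) = ((a1, 1, 1) : G × G × G) * (1, 1, u x3) := by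
      simp [hu3, hu0, Prod.ext_iff, mul_comm]
    rw [hq, hhom _ (Or.inl rfl),
        hvanish (0, x2, 0) (a1, 1, 1) (Or.inr (Or.inr ⟨rfl, rfl⟩)),
        hvanish (0, x2, 0) (1, 1, u x3) (Or.inl ⟨rfl, rfl⟩)]
    simp
  -- general case
  intro x a
  obtain ⟨x1, x2, x3⟩ := x
  have hx : ((x1, x2, x3) : X × X × X) = (x1, 0, 0) + (0, x2, x3) := by
    simp [Prod.ext_iff]
  rw [hx, hcoc, key0, key1, mul_one]
end
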